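/- Let T ⊆ ℝ^n be a nonempty compact set and d a positive integer. For a vector y = (y_α)_{α ∈ ℕ_d^n} and a polynomial f = Σ_{α ∈ ℕ_d^n} f_α x^α of degree at most d, write ⟨f, y⟩ := Σ_α f_α y_α. Then y belongs to the moment cone ℛ_d(T) := { Σ_{i=1}^{M} λ_i [u_i]_d : u_i ∈ T, λ_i ≥ 0, M ∈ ℕ } if and only if ⟨f, y⟩ ≥ 0 for every polynomial f of degree at most d that is nonnegative on T. That is, for compact T, ℛ_d(T) equals the dual cone of the cone 𝒫_d(T) of polynomials of degree at most d that are nonnegative on T. -/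

import Mathlib

/-!
The moment cone is the conic hull of the compact set `[T]_d`, every point of which has
coordinate `u^0 = 1`. By Carathéodory the convex hull of `[T]_d` is compact, and a cone over a
compact base lying in the hyperplane `{y_0 = 1}` is closed. So a vector `y` outside the cone is
separated from it by a linear functional that is nonnegative on the cone and negative at `y`
(Farkas). The coefficients of that functional form a polynomial of degree at most `d` which is
nonnegative on `T` but pairs negatively with `y`.
-/

/-- The vector of all monomials u^α with |α| ≤ d of a point u ∈ ℝ^n. -/
noncomputable def monVec (n d : ℕ) (u : Fin n → ℝ) :
    {α : Fin n →₀ ℕ // (α.sum fun _ k => k) ≤ d} → ℝ :=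
  fun α => ∏ i, u i ^ (α.1 i)

/-- The moment cone ℛ_d(T). -/
def MomentCone (n d : ℕ) (T : Set (Fin n → ℝ)) :
    Set ({α : Fin n →₀ ℕ // (α.sum fun _ k => k) ≤ d} → ℝ) :=
  {y | ∃ (M : ℕ) (lam : Fin M → ℝ) (pts : Fin M → Fin n → ℝ),
    (∀ i, 0 ≤ lam i) ∧ (∀ i, pts i ∈ T) ∧ y = ∑ i, lam i • monVec n d (pts i)}

/-- The pairing ⟨f, y⟩ = Σ_α f_α y_α between a polynomial of degree ≤ d and a
truncated multi-sequence. -/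
noncomputable def pairing (n d : ℕ) (f : MvPolynomial (Fin n) ℝ)
    (y : {α : Fin n →₀ ℕ // (α.sum fun _ k => k) ≤ d} → ℝ) : ℝ :=
  ∑ α ∈ f.support, MvPolynomial.coeff α f *
    (if h : (α.sum fun _ k => k) ≤ d then y ⟨α, h⟩ else 0)

open Set Pointwise

section ConvexGeometry

variable {E : Type*} [AddCommGroup E] [Module ℝ E]

theorem Convex.add_mem_Ici_smul {K : Set E} (hK : Convex ℝ K) {x y : E}
    (hx : x ∈ Ici (0 : ℝ) • K) (hy : y ∈ Ici (0 : ℝ) • K) : x + y ∈ Ici (0 : ℝ) • K := by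
  obtain ⟨s, hs : 0 ≤ s, z, hz, rfl⟩ := hx
  obtain ⟨t, ht : 0 ≤ t, w, hw, rfl⟩ := hy
  rcases (add_nonneg hs ht).eq_or_lt with hst | hst
  · obtain ⟨rfl, rfl⟩ : s = 0 ∧ t = 0 := ⟨by linarith, by linarith⟩
    exact ⟨0, mem_Ici.2 le_rfl, z, hz, by simp⟩
  · refine ⟨s + t, hst.le, (s / (s + t)) • z + (t / (s + t)) • w,
      hK hz hw (div_nonneg hs hst.le) (div_nonneg ht hst.le) (by field_simp), ?_⟩
    simp only [smul_add, smul_smul, mul_div_cancel₀ _ hst.ne']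

theorem PointedCone.coe_hull_eq_Ici_smul_convexHull {s : Set E} (hs : s.Nonempty) :
    (PointedCone.hull ℝ s : Set E) = Ici (0 : ℝ) • convexHull ℝ s := by
  refine Subset.antisymm (fun x hx => ?_) ?_
  · induction hx using Submodule.span_induction with
    | mem x hx => exact ⟨1, mem_Ici.2 zero_le_one, x, subset_convexHull ℝ s hx, one_smul ℝ x⟩
    | zero => exact ⟨0, mem_Ici.2 le_rfl, hs.some, subset_convexHull ℝ s hs.some_mem, zero_smul ℝ _⟩
    | add x y _ _ hx hy => exact (convex_convexHull ℝ s).add_mem_Ici_smul hx hy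
    | smul a x _ hx =>
      obtain ⟨t, ht, z, hz, rfl⟩ := hx
      exact ⟨a * t, mul_nonneg a.2 ht, z, hz, mul_smul (a : ℝ) t z⟩
  · rintro _ ⟨t, ht : 0 ≤ t, z, hz, rfl⟩
    exact (PointedCone.hull ℝ s).smul_mem ht
      (convexHull_min PointedCone.subset_hull (PointedCone.hull ℝ s).convex hz)

variable [TopologicalSpace E]

theorem isCompact_convexHull_of_finiteDimensional [ContinuousAdd E] [ContinuousSMul ℝ E]
    [FiniteDimensional ℝ E] {s : Set E} (hs : IsCompact s) : IsCompact (convexHull ℝ s) := by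
  have hcarath : convexHull ℝ s = ⋃ k : Fin (Module.finrank ℝ E + 2),
      (fun p : (Fin k → ℝ) × (Fin k → E) => ∑ i, p.1 i • p.2 i) ''
        (stdSimplex ℝ (Fin k) ×ˢ univ.pi fun _ => s) := by
    refine Subset.antisymm (fun x hx => ?_) (iUnion_subset fun k => ?_)
    · obtain ⟨ι, _, z, w, hzs, hz, hw0, hw1, rfl⟩ := eq_pos_convex_span_of_mem_convexHull hx
      let e := (Fintype.equivFin ι).symm
      have hcard : Fintype.card ι < Module.finrank ℝ E + 2 :=
        Nat.lt_succ_of_le <| hz.card_le_finrank_succ.trans <| by grw [Submodule.finrank_le]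
      refine mem_iUnion.2 ⟨⟨_, hcard⟩, (w ∘ e, z ∘ e), ⟨⟨fun i => (hw0 _).le, ?_⟩,
        fun i _ => hzs (mem_range_self _)⟩, e.sum_comp fun i => w i • z i⟩
      simpa [e.sum_comp w] using hw1
    · rintro _ ⟨⟨w, p⟩, ⟨hw, hp⟩, rfl⟩
      exact (convex_convexHull ℝ s).sum_mem (fun i _ => hw.1 i) hw.2
        fun i _ => subset_convexHull ℝ s (hp i (mem_univ i))
  rw [hcarath]
  exact isCompact_iUnion fun k =>
    (IsCompact.prod (isCompact_stdSimplex ℝ (Fin k)) (isCompact_univ_pi fun _ => hs)).image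
      (by fun_prop)

/-- The slab `{φ < c}` meets the cone only in the compact set `[0, c] • K`. -/
theorem isClosed_Ici_smul_of_isCompact [ContinuousSMul ℝ E] [T2Space E] {K : Set E}
    (hK : IsCompact K) (φ : E →L[ℝ] ℝ) (hφ : ∀ z ∈ K, φ z = 1) :
    IsClosed (Ici (0 : ℝ) • K) := by
  have hφ_smul : ∀ t, ∀ z ∈ K, φ (t • z) = t := fun t z hz => by simp [hφ z hz]
  refine isClosed_of_closure_subset fun y hy => ?_
  have hslab : {w | φ w < φ y + 1} ∩ Ici (0 : ℝ) • K ⊆ Icc 0 (φ y + 1) • K := by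
    rintro _ ⟨hlt, t, ht, z, hz, rfl⟩
    exact ⟨t, ⟨ht, by simpa [hφ_smul t z hz] using (show φ (t • z) < φ y + 1 from hlt).le⟩,
      z, hz, rfl⟩
  have hy' : y ∈ closure ({w | φ w < φ y + 1} ∩ Ici (0 : ℝ) • K) :=
    (isOpen_lt φ.continuous continuous_const).inter_closure
      ⟨show φ y < φ y + 1 from lt_add_one _, hy⟩
  exact smul_subset_smul_right Icc_subset_Ici_self <|
    ((isCompact_Icc.smul_set hK).isClosed.closure_subset_iff.2 hslab) hy'

theorem PointedCone.isClosed_hull_of_isCompact [ContinuousAdd E] [ContinuousSMul ℝ E]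
    [T2Space E] [FiniteDimensional ℝ E] {s : Set E} (hs : IsCompact s) (φ : E →L[ℝ] ℝ)
    (hφ : ∀ z ∈ s, φ z = 1) : IsClosed (PointedCone.hull ℝ s : Set E) := by
  rcases s.eq_empty_or_nonempty with rfl | hne
  · simp
  rw [coe_hull_eq_Ici_smul_convexHull hne]
  exact isClosed_Ici_smul_of_isCompact (isCompact_convexHull_of_finiteDimensional hs) φ
    fun z hz => convexHull_min hφ ((convex_singleton 1).linear_preimage φ.toLinearMap) hz

end ConvexGeometry

theorem LinearMap.apply_eq_dotProduct_single {ι R : Type*} [Fintype ι] [DecidableEq ι]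
    [CommSemiring R] (f : (ι → R) →ₗ[R] R) (x : ι → R) :
    f x = (fun i => f (Pi.single i 1)) ⬝ᵥ x := by
  conv_lhs => rw [← Finset.univ_sum_single x]
  rw [map_sum, dotProduct]
  refine Finset.sum_congr rfl fun i _ => ?_
  rw [mul_comm, ← smul_eq_mul, ← map_smul, ← Pi.single_smul, smul_eq_mul, mul_one]

/-- The index set `ℕ_d^n`. -/
abbrev MonomialIndex (n d : ℕ) : Type := {α : Fin n →₀ ℕ // (α.sum fun _ k => k) ≤ d}

instance (n d : ℕ) : Finite (MonomialIndex n d) := (Finsupp.finite_of_degree_le d).to_subtype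

noncomputable instance (n d : ℕ) : Fintype (MonomialIndex n d) := Fintype.ofFinite _

open MvPolynomial

section Coefficients

variable {n : ℕ} (d : ℕ)

def truncCoeffs (f : MvPolynomial (Fin n) ℝ) : MonomialIndex n d → ℝ := fun β => f.coeff β.1

noncomputable def ofTruncCoeffs (c : MonomialIndex n d → ℝ) : MvPolynomial (Fin n) ℝ :=
  ∑ β, monomial β.1 (c β)

variable {d}

theorem totalDegree_ofTruncCoeffs_le (c : MonomialIndex n d → ℝ) :
    (ofTruncCoeffs d c).totalDegree ≤ d :=
  (totalDegree_finsetSum _ _).trans <|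
    Finset.sup_le fun β _ => (totalDegree_monomial_le _ _).trans β.2

theorem truncCoeffs_ofTruncCoeffs (c : MonomialIndex n d → ℝ) :
    truncCoeffs d (ofTruncCoeffs d c) = c := by
  classical
  ext β
  simp [truncCoeffs, ofTruncCoeffs, coeff_sum, coeff_monomial, Subtype.val_inj]

theorem pairing_eq_dotProduct {f : MvPolynomial (Fin n) ℝ} (hf : f.totalDegree ≤ d)
    (y : MonomialIndex n d → ℝ) : pairing n d f y = truncCoeffs d f ⬝ᵥ y := by
  classical
  let F : (Fin n →₀ ℕ) → ℝ := fun α =>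
    f.coeff α * if h : (α.sum fun _ k => k) ≤ d then y ⟨α, h⟩ else 0
  have hdeg := Finsupp.finite_of_degree_le (σ := Fin n) d
  calc pairing n d f y = ∑ α ∈ hdeg.toFinset, F α :=
        Finset.sum_subset (fun α hα => hdeg.mem_toFinset.2 ((le_totalDegree hα).trans hf))
          fun α _ hα => by simp [notMem_support_iff.1 hα]
    _ = ∑ β : MonomialIndex n d, F β.1 := Finset.sum_subtype _ (fun α => hdeg.mem_toFinset) F
    _ = truncCoeffs d f ⬝ᵥ y := Finset.sum_congr rfl fun β _ => by simp [F, β.2, truncCoeffs]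

theorem pairing_monVec {f : MvPolynomial (Fin n) ℝ} (hf : f.totalDegree ≤ d) (u : Fin n → ℝ) :
    pairing n d f (monVec n d u) = eval u f := by
  rw [pairing, eval_eq']
  exact Finset.sum_congr rfl fun α hα => by rw [dif_pos ((le_totalDegree hα).trans hf)]; rfl

theorem exists_pairing_eq (φ : (MonomialIndex n d → ℝ) →ₗ[ℝ] ℝ) :
    ∃ g : MvPolynomial (Fin n) ℝ, g.totalDegree ≤ d ∧ ∀ y, pairing n d g y = φ y := by
  classical
  refine ⟨ofTruncCoeffs d fun β => φ (Pi.single β 1), totalDegree_ofTruncCoeffs_le _, fun y => ?_⟩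
  rw [pairing_eq_dotProduct (totalDegree_ofTruncCoeffs_le _), truncCoeffs_ofTruncCoeffs,
    ← φ.apply_eq_dotProduct_single]

end Coefficients

theorem momentCone_eq_hull (n d : ℕ) (T : Set (Fin n → ℝ)) :
    MomentCone n d T = PointedCone.hull ℝ (monVec n d '' T) := by
  ext y
  rw [SetLike.mem_coe, Submodule.mem_span_set']
  constructor
  · rintro ⟨M, lam, pts, hlam, hpts, rfl⟩
    exact ⟨M, fun i => ⟨lam i, hlam i⟩, fun i => ⟨monVec n d (pts i), pts i, hpts i, rfl⟩, rfl⟩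
  · rintro ⟨M, c, v, rfl⟩
    choose pts hpts hv using fun i => (v i).2
    exact ⟨M, fun i => c i, pts, fun i => (c i).2, hpts, by simp only [hv]; rfl⟩

theorem continuous_monVec (n d : ℕ) : Continuous (monVec n d) := by
  unfold monVec
  fun_prop

/-- Every `[u]_d` has coordinate `u^0 = 1`, so the cone has a compact base. -/
theorem isClosed_hull_monVec_image {n d : ℕ} {T : Set (Fin n → ℝ)} (hT : IsCompact T) :
    IsClosed (PointedCone.hull ℝ (monVec n d '' T) : Set (MonomialIndex n d → ℝ)) := by
  refine PointedCone.isClosed_hull_of_isCompact (hT.image (continuous_monVec n d))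
    (ContinuousLinearMap.proj (⟨0, by simp⟩ : MonomialIndex n d)) ?_
  rintro _ ⟨u, -, rfl⟩
  simp [monVec]

theorem stmt15_general {n d : ℕ} (T : Set (Fin n → ℝ))
    (hT : IsCompact T) :
    ∀ y : {α : Fin n →₀ ℕ // (α.sum fun _ k => k) ≤ d} → ℝ,
      y ∈ MomentCone n d T ↔
      ∀ f : MvPolynomial (Fin n) ℝ, f.totalDegree ≤ d →
        (∀ u ∈ T, 0 ≤ MvPolynomial.eval u f) → 0 ≤ pairing n d f y := by
  intro y
  constructor
  · rintro ⟨M, lam, pts, hlam, hpts, rfl⟩ f hf hfT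
    rw [pairing_eq_dotProduct hf, dotProduct_sum]
    refine Finset.sum_nonneg fun i _ => ?_
    rw [dotProduct_smul, ← pairing_eq_dotProduct hf, pairing_monVec hf, smul_eq_mul]
    exact mul_nonneg (hlam i) (hfT _ (hpts i))
  · intro hy
    by_contra hy'
    let C : ProperCone ℝ (MonomialIndex n d → ℝ) :=
      ⟨_, isClosed_hull_monVec_image hT⟩
    rw [momentCone_eq_hull] at hy'
    obtain ⟨φ, hφC, hφy⟩ := C.hyperplane_separation_point hy'
    obtain ⟨g, hg, hgφ⟩ := exists_pairing_eq φ.toLinearMap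
    have hgy := hy g hg fun u hu => by
      rw [← pairing_monVec hg, hgφ]
      exact hφC _ (PointedCone.subset_hull ⟨u, hu, rfl⟩)
    rw [hgφ, ContinuousLinearMap.coe_coe] at hgy
    exact hgy.not_gt hφy

theorem stmt15 {n d : ℕ} (hd : 0 < d) (T : Set (Fin n → ℝ))
    (hT : IsCompact T) (hTne : T.Nonempty) :
    ∀ y : {α : Fin n →₀ ℕ // (α.sum fun _ k => k) ≤ d} → ℝ,
      y ∈ MomentCone n d T ↔
      ∀ f : MvPolynomial (Fin n) ℝ, f.totalDegree ≤ d →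
        (∀ u ∈ T, 0 ≤ MvPolynomial.eval u f) → 0 ≤ pairing n d f y :=
  stmt15_general T hT
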